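/- arXiv:0712.1892 — 8 statements merged into one kernel-verified Lean document; each statement's English description precedes it below -/
import Mathlib

section
/- All coefficients of the minimal polynomial P of the generic element α lie in (the image in K of) the polynomial ring S = R[t₁, …, tₙ]. In particular the constant term P(0) is (the image of) a polynomial in R[t₁, …, tₙ]. -/
/-!
The generic element `α` is the image of `∑ tᵢ ⊗ eᵢ ∈ S ⊗[R] A`, which is
integral over `S` because `S ⊗[R] A` is a finite `S`-module. Since `S` is integrally closed
(normality passes to polynomial rings), Gauss's lemma shows that a monic factor over
`K = Frac S` of a monic polynomial over `S` has its coefficients in `S`; the minimal polynomial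
of `α` over `K` is such a factor.
-/

open scoped TensorProduct

universe u v w

open Polynomial

instance MvPolynomial.isIntegrallyClosed {σ R : Type*} [Finite σ] [CommRing R] [IsDomain R]
    [IsIntegrallyClosed R] : IsIntegrallyClosed (MvPolynomial σ R) := by
  suffices ∀ n, IsIntegrallyClosed (MvPolynomial (Fin n) R) from
    .of_equiv (MvPolynomial.renameEquiv R (Finite.equivFin σ).symm).toRingEquiv
  intro n
  induction n with
  | zero => exact .of_equiv (MvPolynomial.isEmptyRingEquiv R (Fin 0)).symm
  | succ n ih => exact .of_equiv (MvPolynomial.finSuccEquiv R n).toRingEquiv.symm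

theorem minpoly_mem_lifts_of_isIntegral {S K L : Type*} [CommRing S] [IsDomain S]
    [IsIntegrallyClosed S] [Field K] [Algebra S K] [IsFractionRing S K] [Ring L] [Algebra S L]
    [Algebra K L] [IsScalarTower S K L] {x : L} (hx : IsIntegral S x) :
    minpoly K x ∈ lifts (algebraMap S K) := by
  obtain ⟨q, hq, hqx⟩ := id hx
  have hdvd : minpoly K x ∣ q.map (algebraMap S K) :=
    minpoly.dvd K x (by rwa [aeval_map_algebraMap, aeval_def])
  obtain ⟨g, hg⟩ := IsIntegrallyClosed.eq_map_mul_C_of_dvd K hq hdvd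
  rw [(minpoly.monic hx.tower_top).leadingCoeff, C_1, mul_one] at hg
  exact ⟨g, hg⟩

theorem isIntegral_sum_algebraMap_tmul {R S K A ι : Type*} [CommRing R] [CommRing S]
    [CommRing K] [Ring A] [Algebra R S] [Algebra S K] [Algebra R K] [IsScalarTower R S K]
    [Algebra R A] [Module.Finite R A] [Fintype ι] (s : ι → S) (a : ι → A) :
    IsIntegral S (∑ i, algebraMap S K (s i) ⊗ₜ[R] a i) := by
  let φ : S ⊗[R] A →ₐ[S] K ⊗[R] A :=
    Algebra.TensorProduct.map (Algebra.ofId S K) (AlgHom.id R A)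
  have hφ : φ (∑ i, s i ⊗ₜ[R] a i) = ∑ i, algebraMap S K (s i) ⊗ₜ[R] a i := by
    simp [φ, map_sum, Algebra.TensorProduct.map_tmul]
  exact hφ ▸ (IsIntegral.of_finite S _).map φ

theorem coeffs_of_minpoly_of_generic_element_mem_range_general
    {R : Type u} [CommRing R] [IsDomain R] [IsIntegrallyClosed R]
    {n : ℕ}
    {A : Type v} [Ring A] [Algebra R A] (e : Module.Basis (Fin n) R A)
    {K : Type w} [Field K] [Algebra (MvPolynomial (Fin n) R) K]
    [IsFractionRing (MvPolynomial (Fin n) R) K]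
    [Algebra R K] [IsScalarTower R (MvPolynomial (Fin n) R) K]
    (α : K ⊗[R] A)
    (hα : α = ∑ i, algebraMap (MvPolynomial (Fin n) R) K (MvPolynomial.X i) ⊗ₜ[R] e i)
    (P : Polynomial K) (hP : P = minpoly K α) :
    ∀ j : ℕ, P.coeff j ∈ (algebraMap (MvPolynomial (Fin n) R) K).range := by
  have : Module.Finite R A := .of_basis e
  have hα_integral : IsIntegral (MvPolynomial (Fin n) R) α :=
    hα ▸ isIntegral_sum_algebraMap_tmul _ _
  subst hP
  exact (lifts_iff_coeff_lifts _).mp (minpoly_mem_lifts_of_isIntegral hα_integral)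

/-- All coefficients of the minimal polynomial `P` of the generic element `α` of a
finite free algebra `A` over an integrally closed domain `R` lie in the image in
`K = Frac(R[t₁,…,tₙ])` of the polynomial ring `S = R[t₁,…,tₙ]`. -/
theorem coeffs_of_minpoly_of_generic_element_mem_range
    {R : Type u} [CommRing R] [IsDomain R] [IsIntegrallyClosed R]
    {n : ℕ} (hn : 2 ≤ n)
    {A : Type v} [Ring A] [Algebra R A] (e : Module.Basis (Fin n) R A)
    {K : Type w} [Field K] [Algebra (MvPolynomial (Fin n) R) K]
    [IsFractionRing (MvPolynomial (Fin n) R) K]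
    [Algebra R K] [IsScalarTower R (MvPolynomial (Fin n) R) K]
    (α : K ⊗[R] A)
    (hα : α = ∑ i, algebraMap (MvPolynomial (Fin n) R) K (MvPolynomial.X i) ⊗ₜ[R] e i)
    (P : Polynomial K) (hP : P = minpoly K α) :
    ∀ j : ℕ, P.coeff j ∈ (algebraMap (MvPolynomial (Fin n) R) K).range :=
  coeffs_of_minpoly_of_generic_element_mem_range_general e α hα P hP
end

section
/- Uniqueness of the determinant: let D ∈ S = R[t₁, …, tₙ] be a homogeneous polynomial of degree d such that (i) D evaluated at the coordinates of the unit element 1 of A equals 1, and (ii) the degree-d polynomial Q(T) := D evaluated at the coordinates of T·1 − α (an element of (S[T]) ⊗_R A, coordinates taken in S[T]) satisfies Q(α) = 0 in A ⊗_R K. Then D = det_A, i.e. the image of D in K equals (−1)^d·P(0). -/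
/-!
By homogeneity, `Q(T) = D(T·1 − t)` has degree at most `d`, leading coefficient `D(1) = 1` and
constant term `D(−t) = (−1)^d D`. Being monic of degree `d = deg P` and killing `α`, it is the
minimal polynomial `P`; comparing constant terms gives `D = (−1)^d P(0)`.
-/

open scoped TensorProduct

open Polynomial

universe u v w

namespace Polynomial

theorem coeff_prod_sum_of_natDegree_le {ι R : Type*} [CommSemiring R] (s : Finset ι)
    (p : ι → R[X]) (m : ι → ℕ) (h : ∀ i ∈ s, (p i).natDegree ≤ m i) :
    (∏ i ∈ s, p i).coeff (∑ i ∈ s, m i) = ∏ i ∈ s, (p i).coeff (m i) := by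
  classical
  induction s using Finset.induction with
  | empty => simp
  | @insert a s ha ih =>
    simp only [Finset.forall_mem_insert] at h
    rw [Finset.prod_insert ha, Finset.sum_insert ha, Finset.prod_insert ha,
      coeff_mul_add_eq_of_natDegree_le h.1
        ((natDegree_prod_le _ _).trans (Finset.sum_le_sum h.2)), ih h.2]

end Polynomial

namespace MvPolynomial

section CommSemiring

variable {σ R S : Type*} [CommSemiring R] [CommSemiring S] [Algebra R S]

theorem coeff_zero_aeval (f : σ → S[X]) (D : MvPolynomial σ R) :
    (aeval f D).coeff 0 = aeval (fun i => (f i).coeff 0) D := by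
  induction D using MvPolynomial.induction_on with
  | C r => simp
  | add p q hp hq => simp [hp, hq]
  | mul_X p i hp => simp [mul_coeff_zero, hp]

section LinearSubstitution

variable (f : σ → S[X]) (hf : ∀ i, (f i).natDegree ≤ 1)
include hf

theorem natDegree_aeval_monomial_le (s : σ →₀ ℕ) (r : R) :
    (aeval f (monomial s r)).natDegree ≤ s.degree := by
  rw [aeval_monomial, Finsupp.prod, Finsupp.degree_apply]
  refine natDegree_mul_le.trans ?_
  rw [Polynomial.algebraMap_apply, natDegree_C, zero_add]
  refine (natDegree_prod_le _ _).trans (Finset.sum_le_sum fun i _ => ?_)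
  simpa using natDegree_pow_le_of_le (s i) (hf i)

theorem coeff_aeval_monomial_degree (s : σ →₀ ℕ) (r : R) :
    (aeval f (monomial s r)).coeff s.degree = aeval (fun i => (f i).coeff 1) (monomial s r) := by
  have hpow : ∀ i ∈ s.support, (f i ^ s i).natDegree ≤ s i := fun i _ => by
    simpa using natDegree_pow_le_of_le (s i) (hf i)
  rw [aeval_monomial, aeval_monomial, Finsupp.prod, Finsupp.prod, Finsupp.degree_apply,
    Polynomial.algebraMap_apply, Polynomial.coeff_C_mul, coeff_prod_sum_of_natDegree_le _ _ _ hpow]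
  congr 1
  refine Finset.prod_congr rfl fun i _ => ?_
  simpa using coeff_pow_of_natDegree_le (m := s i) (hf i)

end LinearSubstitution

namespace IsHomogeneous

variable {D : MvPolynomial σ R} {d : ℕ}

theorem natDegree_aeval_le (hD : D.IsHomogeneous d) (f : σ → S[X])
    (hf : ∀ i, (f i).natDegree ≤ 1) : (MvPolynomial.aeval f D).natDegree ≤ d := by
  rw [D.as_sum, map_sum]
  refine natDegree_sum_le_of_forall_le _ _ fun s hs => ?_
  exact (natDegree_aeval_monomial_le f hf s _).trans (hD.degree_eq_sum_deg_support hs).ge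

theorem coeff_aeval (hD : D.IsHomogeneous d) (f : σ → S[X])
    (hf : ∀ i, (f i).natDegree ≤ 1) :
    (MvPolynomial.aeval f D).coeff d = MvPolynomial.aeval (fun i => (f i).coeff 1) D := by
  conv_lhs => rw [D.as_sum]
  conv_rhs => rw [D.as_sum]
  rw [map_sum, map_sum, finsetSum_coeff]
  refine Finset.sum_congr rfl fun s hs => ?_
  rw [hD.degree_eq_sum_deg_support hs, ← Finsupp.degree_apply,
    coeff_aeval_monomial_degree f hf]

theorem aeval_smul (hD : D.IsHomogeneous d) (c : S) (x : σ → S) :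
    MvPolynomial.aeval (c • x) D = c ^ d * MvPolynomial.aeval x D := by
  conv_lhs => rw [D.as_sum]
  conv_rhs => rw [D.as_sum]
  rw [map_sum, map_sum, Finset.mul_sum]
  refine Finset.sum_congr rfl fun s hs => ?_
  rw [aeval_monomial, aeval_monomial, Finsupp.prod, Finsupp.prod, hD.degree_eq_sum_deg_support hs]
  simp only [Pi.smul_apply, smul_eq_mul, mul_pow, Finset.prod_mul_distrib,
    Finset.prod_pow_eq_pow_sum]
  ring

end IsHomogeneous

end CommSemiring

section CommRing

variable {σ R : Type*} [CommRing R]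

/-- For `c` the coordinates of `1 ∈ A`, this is `Q(T) = D(T·1 − α)`. -/
noncomputable def genericCharpoly (D : MvPolynomial σ R) (c : σ → R) : (MvPolynomial σ R)[X] :=
  aeval (fun i => Polynomial.C (algebraMap R (MvPolynomial σ R) (c i)) * Polynomial.X
    - Polynomial.C (X i)) D

variable {D : MvPolynomial σ R} {d : ℕ}

theorem natDegree_C_mul_X_sub_C_X_le (c : σ → R) (i : σ) :
    (Polynomial.C (algebraMap R (MvPolynomial σ R) (c i)) * Polynomial.X
      - Polynomial.C (X i)).natDegree ≤ 1 := by
  compute_degree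

theorem natDegree_genericCharpoly_le (hD : D.IsHomogeneous d) (c : σ → R) :
    (genericCharpoly D c).natDegree ≤ d :=
  hD.natDegree_aeval_le _ (natDegree_C_mul_X_sub_C_X_le c)

theorem coeff_genericCharpoly (hD : D.IsHomogeneous d) (c : σ → R) :
    (genericCharpoly D c).coeff d = algebraMap R (MvPolynomial σ R) (eval c D) := by
  rw [genericCharpoly, hD.coeff_aeval _ (natDegree_C_mul_X_sub_C_X_le c)]
  simpa using (DFunLike.congr_fun (comp_aeval (f := c) (Algebra.ofId R (MvPolynomial σ R))) D).symm

theorem coeff_zero_genericCharpoly (hD : D.IsHomogeneous d) (c : σ → R) :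
    (genericCharpoly D c).coeff 0 = (-1) ^ d * D := by
  rw [genericCharpoly, coeff_zero_aeval]
  convert hD.aeval_smul (-1) (X : σ → MvPolynomial σ R) using 3
  · funext i
    simp
  · simp

end CommRing

end MvPolynomial

theorem minpoly.eq_of_monic_of_natDegree_le {K B : Type*} [Field K] [Ring B] [Algebra K B] {x : B}
    {p : K[X]} (hp : p.Monic) (hx : Polynomial.aeval x p = 0)
    (hdeg : p.natDegree ≤ (minpoly K x).natDegree) :
    p = minpoly K x := by
  refine minpoly.unique_of_degree_le_degree_minpoly K x hp hx ?_
  rw [degree_eq_natDegree hp.ne_zero, degree_eq_natDegree (minpoly.ne_zero ⟨p, hp, hx⟩)]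
  exact_mod_cast hdeg

theorem det_unique_general
    {R : Type u} [CommRing R]
    {n : ℕ}
    {A : Type v} [Ring A] [Algebra R A] (e : Module.Basis (Fin n) R A)
    {K : Type w} [Field K] [Algebra (MvPolynomial (Fin n) R) K]
    [Algebra R K]
    (α : K ⊗[R] A)
    (d : ℕ) (hd : d = (minpoly K α).natDegree)
    (D : MvPolynomial (Fin n) R)
    (hhom : D.IsHomogeneous d)
    (hone : MvPolynomial.eval (fun i => e.repr 1 i) D = 1)
    (hkill : Polynomial.aeval α
      (Polynomial.map (algebraMap (MvPolynomial (Fin n) R) K)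
        (MvPolynomial.aeval
          (fun i => Polynomial.C (algebraMap R (MvPolynomial (Fin n) R) (e.repr 1 i))
              * Polynomial.X - Polynomial.C (MvPolynomial.X i)) D
          : Polynomial (MvPolynomial (Fin n) R))) = 0) :
    algebraMap (MvPolynomial (Fin n) R) K D = (-1) ^ d * (minpoly K α).coeff 0 := by
  set Q := MvPolynomial.genericCharpoly D fun i => e.repr 1 i
  have hQ_monic : Q.Monic := monic_of_natDegree_le_of_coeff_eq_one d
    (MvPolynomial.natDegree_genericCharpoly_le hhom _)
    (by rw [MvPolynomial.coeff_genericCharpoly hhom, hone, map_one])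
  have hQ_minpoly : Q.map (algebraMap _ K) = minpoly K α :=
    minpoly.eq_of_monic_of_natDegree_le (hQ_monic.map _) hkill
      (by
        rw [hQ_monic.natDegree_map, ← hd]
        exact MvPolynomial.natDegree_genericCharpoly_le hhom _)
  rw [← hQ_minpoly, coeff_map, MvPolynomial.coeff_zero_genericCharpoly hhom, map_mul, map_pow,
    map_neg, map_one, ← mul_assoc, ← mul_pow, neg_one_mul, neg_neg, one_pow, one_mul]

/-- Uniqueness of the determinant: if `D ∈ R[t₁,…,tₙ]` is homogeneous of degree `d`,
takes the value `1` at the coordinates of the unit `1` of `A`, and the polynomial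
`Q(T) = D(coordinates of T·1 − α)` kills the generic element `α`, then `D = det_A`,
i.e. the image of `D` in `K` is `(−1)^d P(0)`. -/
theorem det_unique
    {R : Type u} [CommRing R] [IsDomain R] [IsIntegrallyClosed R]
    {n : ℕ} (hn : 2 ≤ n)
    {A : Type v} [Ring A] [Algebra R A] (e : Module.Basis (Fin n) R A)
    {K : Type w} [Field K] [Algebra (MvPolynomial (Fin n) R) K]
    [IsFractionRing (MvPolynomial (Fin n) R) K]
    [Algebra R K] [IsScalarTower R (MvPolynomial (Fin n) R) K]
    (α : K ⊗[R] A)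
    (hα : α = ∑ i, algebraMap (MvPolynomial (Fin n) R) K (MvPolynomial.X i) ⊗ₜ[R] e i)
    (d : ℕ) (hd : d = (minpoly K α).natDegree)
    (D : MvPolynomial (Fin n) R)
    (hhom : D.IsHomogeneous d)
    (hone : MvPolynomial.eval (fun i => e.repr 1 i) D = 1)
    (hkill : Polynomial.aeval α
      (Polynomial.map (algebraMap (MvPolynomial (Fin n) R) K)
        (MvPolynomial.aeval
          (fun i => Polynomial.C (algebraMap R (MvPolynomial (Fin n) R) (e.repr 1 i))
              * Polynomial.X - Polynomial.C (MvPolynomial.X i)) D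
          : Polynomial (MvPolynomial (Fin n) R))) = 0) :
    algebraMap (MvPolynomial (Fin n) R) K D = (-1) ^ d * (minpoly K α).coeff 0 :=
  det_unique_general e α d hd D hhom hone hkill
end

section
/- Compatibility with flat base change: let φ : R → R' be a flat ring homomorphism where R' is also an integrally closed integral domain, and let A' = A ⊗_R R' with the basis induced by e₁, …, eₙ. Then the minimal polynomial P' of the generic element of A' over Frac(R'[t₁, …, tₙ]) is the image of P under the induced map, and det_{A'} is the image of det_A under the induced map R[t₁, …, tₙ] → R'[t₁, …, tₙ]. In particular the degree of algebraicity of A' equals d. -/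
/-!
Flatness makes `R → R'` injective, so `R[t] → R'[t]` extends to a field map `f : K → K'`, and
`c ⊗ a ↦ f c ⊗ (1 ⊗ a)` is a ring map `K ⊗[R] A → K' ⊗[R'] (R' ⊗[R] A)` over `f` carrying `α`
to `α'` and the basis `1 ⊗ eᵢ` to the basis `1 ⊗ 1 ⊗ eᵢ`. Hence `P.map f` annihilates `α'`.
Linear independence of `1, α, …, α^(d-1)` is a statement about the coordinate vectors, which
survives the field extension `f`; so `P.map f`, monic of degree `d`, is the minimal polynomial
of `α'`.
-/

open scoped TensorProduct
open Polynomial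

section FieldExtension

variable {K K' ι : Type*} [Field K] [Field K'] [Finite ι]

theorem LinearIndependent.map_of_map_basis {L L' κ : Type*} [AddCommGroup L] [AddCommGroup L']
    [Module K L] [Module K' L'] {f : K →+* K'} (F : L →ₛₗ[f] L')
    (b : Module.Basis ι K L) (b' : Module.Basis ι K' L') (hb : ∀ i, F (b i) = b' i)
    {v : κ → L} (hv : LinearIndependent K v) : LinearIndependent K' (F ∘ v) := by
  let _ := f.toAlgebra
  have := Fintype.ofFinite ι
  have hcoord : LinearIndependent K fun k ↦ b.equivFun (v k) := hv.map' _ b.equivFun.ker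
  have hFw (w : L) : F w = b'.equivFun.symm (f ∘ b.equivFun w) := by
    conv_lhs => rw [← b.sum_equivFun w]
    simp only [map_sum, map_smulₛₗ, hb, Module.Basis.equivFun_symm_apply, Function.comp_apply]
  have hFv : F ∘ v = b'.equivFun.symm ∘ fun k ↦ algebraMap K K' ∘ b.equivFun (v k) :=
    funext fun k ↦ hFw (v k)
  rw [hFv]
  exact ((linearIndependent_algebraMap_comp_iff (S := K')).2 hcoord).map' _ b'.equivFun.symm.ker

theorem minpoly_map_of_map_basis {L L' : Type*} [Ring L] [Ring L'] [Algebra K L] [Algebra K' L']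
    (f : K →+* K') (F : L →+* L') (hF : ∀ c, F (algebraMap K L c) = algebraMap K' L' (f c))
    (b : Module.Basis ι K L) (b' : Module.Basis ι K' L') (hb : ∀ i, F (b i) = b' i) (x : L) :
    minpoly K' (F x) = (minpoly K x).map f := by
  have : Module.Finite K L := .of_basis b
  have hx : IsIntegral K x := .of_finite K x
  let Fₛ : L →ₛₗ[f] L' :=
    { toFun := F
      map_add' := map_add F
      map_smul' := fun c w ↦ by simp only [Algebra.smul_def, map_mul, hF] }
  have hind : LinearIndependent K' fun i : Fin (minpoly K x).natDegree ↦ F x ^ (i : ℕ) := by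
    simpa [Fₛ, Function.comp_def] using (linearIndependent_pow x).map_of_map_basis Fₛ b b' hb
  have hcomp : (algebraMap K' L').comp f = F.comp (algebraMap K L) :=
    RingHom.ext fun c ↦ (hF c).symm
  refine minpoly.eq_of_linearIndependent _ _ ((minpoly.monic hx).map f) ?_ _ ?_ hind
  · rw [aeval_def, eval₂_map, hcomp, ← hom_eval₂, ← aeval_def, minpoly.aeval, map_zero]
  · rw [degree_map, degree_eq_natDegree (minpoly.ne_zero hx)]

end FieldExtension

theorem Algebra.TensorProduct.exists_ringHom_tmul_one_tmul {R R' K K' A : Type*} [CommRing R]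
    [CommRing R'] [Algebra R R'] [CommRing K] [Algebra R K] [CommRing K'] [Algebra R' K']
    [Ring A] [Algebra R A] (f : K →+* K')
    (hf : ∀ r, f (algebraMap R K r) = algebraMap R' K' (algebraMap R R' r)) :
    ∃ F : K ⊗[R] A →+* K' ⊗[R'] (R' ⊗[R] A), ∀ c a, F (c ⊗ₜ a) = f c ⊗ₜ (1 ⊗ₜ a) := by
  let _ : Algebra R K' := ((algebraMap R' K').comp (algebraMap R R')).toAlgebra
  have : IsScalarTower R R' K' := .of_algebraMap_eq' rfl
  let fₐ : K →ₐ[R] K' := { f with commutes' := hf }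
  let g : A →ₐ[R] K' ⊗[R'] (R' ⊗[R] A) := (includeRight.restrictScalars R).comp includeRight
  refine ⟨(lift (includeLeft.comp fₐ) g fun c a ↦ ?_).toRingHom, fun c a ↦ ?_⟩
  · simp only [AlgHom.comp_apply, includeLeft_apply]
    exact Algebra.commutes (fₐ c) (g a)
  · simp [fₐ, g]

theorem det_flat_base_change_general
    {R : Type u} [CommRing R] [IsDomain R]
    {n : ℕ}
    {A : Type v} [Ring A] [Algebra R A] (e : Module.Basis (Fin n) R A)
    {K : Type w} [Field K] [Algebra (MvPolynomial (Fin n) R) K]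
    [IsFractionRing (MvPolynomial (Fin n) R) K]
    [Algebra R K] [IsScalarTower R (MvPolynomial (Fin n) R) K]
    (α : K ⊗[R] A)
    (hα : α = ∑ i, algebraMap (MvPolynomial (Fin n) R) K (MvPolynomial.X i) ⊗ₜ[R] e i)
    (d : ℕ) (hd : d = (minpoly K α).natDegree)
    {R' : Type u'} [CommRing R'] [IsDomain R']
    [Algebra R R'] [Module.Flat R R']
    {K' : Type w'} [Field K'] [Algebra (MvPolynomial (Fin n) R') K']
    [IsFractionRing (MvPolynomial (Fin n) R') K']
    [Algebra R' K'] [IsScalarTower R' (MvPolynomial (Fin n) R') K']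
    (α' : K' ⊗[R'] (R' ⊗[R] A))
    (hα' : α' = ∑ i, algebraMap (MvPolynomial (Fin n) R') K' (MvPolynomial.X i)
      ⊗ₜ[R'] (Algebra.TensorProduct.basis R' e i)) :
    (minpoly K' α').natDegree = d
    ∧ (∀ (j : ℕ) (c : MvPolynomial (Fin n) R),
        algebraMap (MvPolynomial (Fin n) R) K c = (minpoly K α).coeff j →
        algebraMap (MvPolynomial (Fin n) R') K'
            (MvPolynomial.map (algebraMap R R') c) = (minpoly K' α').coeff j)
    ∧ ∀ c : MvPolynomial (Fin n) R,
        algebraMap (MvPolynomial (Fin n) R) K c = (-1) ^ d * (minpoly K α).coeff 0 →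
        algebraMap (MvPolynomial (Fin n) R') K' (MvPolynomial.map (algebraMap R R') c)
          = (-1) ^ d * (minpoly K' α').coeff 0 := by
  have hg : Function.Injective ((algebraMap (MvPolynomial (Fin n) R') K').comp
      (MvPolynomial.map (algebraMap R R'))) :=
    (IsFractionRing.injective _ K').comp
      (MvPolynomial.map_injective _ (FaithfulSMul.algebraMap_injective R R'))
  let f : K →+* K' := IsFractionRing.lift hg
  have hf (p : MvPolynomial (Fin n) R) :
      f (algebraMap _ K p) = algebraMap _ K' (MvPolynomial.map (algebraMap R R') p) :=
    IsFractionRing.lift_algebraMap hg p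
  obtain ⟨F, hF⟩ := Algebra.TensorProduct.exists_ringHom_tmul_one_tmul (R' := R') (A := A) f
    fun r ↦ by
      rw [IsScalarTower.algebraMap_apply R (MvPolynomial (Fin n) R) K, hf,
        IsScalarTower.algebraMap_apply R' (MvPolynomial (Fin n) R') K',
        MvPolynomial.algebraMap_eq, MvPolynomial.algebraMap_eq, MvPolynomial.map_C]
  have hFα : F α = α' := by simp [hα, hα', hF, hf]
  have hminpoly : minpoly K' α' = (minpoly K α).map f := by
    rw [← hFα]
    refine minpoly_map_of_map_basis f F (fun c ↦ ?_) (Algebra.TensorProduct.basis K e)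
      (Algebra.TensorProduct.basis K' (Algebra.TensorProduct.basis R' e)) (fun i ↦ ?_) α
    · simp [Algebra.TensorProduct.algebraMap_apply, Algebra.TensorProduct.one_def, hF]
    · simp [hF]
  subst hd
  refine ⟨by rw [hminpoly, natDegree_map], fun j c hc ↦ ?_, fun c hc ↦ ?_⟩
  · rw [hminpoly, coeff_map, ← hc, hf]
  · rw [hminpoly, coeff_map, ← hf, hc, map_mul, map_pow, map_neg, map_one]

/-- Compatibility of the minimal polynomial of the generic element (and hence of the
determinant) with flat base change `R → R'` between integrally closed domains:
the minimal polynomial `P'` of the generic element of `A' = R' ⊗[R] A` is the image of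
`P`, coefficientwise via `R[t₁,…,tₙ] → R'[t₁,…,tₙ]`; in particular `deg P' = d`, and
`det_{A'}` is the image of `det_A`. -/
theorem det_flat_base_change
    {R : Type u} [CommRing R] [IsDomain R] [IsIntegrallyClosed R]
    {n : ℕ} (hn : 2 ≤ n)
    {A : Type v} [Ring A] [Algebra R A] (e : Module.Basis (Fin n) R A)
    {K : Type w} [Field K] [Algebra (MvPolynomial (Fin n) R) K]
    [IsFractionRing (MvPolynomial (Fin n) R) K]
    [Algebra R K] [IsScalarTower R (MvPolynomial (Fin n) R) K]
    (α : K ⊗[R] A)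
    (hα : α = ∑ i, algebraMap (MvPolynomial (Fin n) R) K (MvPolynomial.X i) ⊗ₜ[R] e i)
    (d : ℕ) (hd : d = (minpoly K α).natDegree)
    {R' : Type u'} [CommRing R'] [IsDomain R'] [IsIntegrallyClosed R']
    [Algebra R R'] [Module.Flat R R']
    {K' : Type w'} [Field K'] [Algebra (MvPolynomial (Fin n) R') K']
    [IsFractionRing (MvPolynomial (Fin n) R') K']
    [Algebra R' K'] [IsScalarTower R' (MvPolynomial (Fin n) R') K']
    (α' : K' ⊗[R'] (R' ⊗[R] A))
    (hα' : α' = ∑ i, algebraMap (MvPolynomial (Fin n) R') K' (MvPolynomial.X i)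
      ⊗ₜ[R'] (Algebra.TensorProduct.basis R' e i)) :
    (minpoly K' α').natDegree = d
    ∧ (∀ (j : ℕ) (c : MvPolynomial (Fin n) R),
        algebraMap (MvPolynomial (Fin n) R) K c = (minpoly K α).coeff j →
        algebraMap (MvPolynomial (Fin n) R') K'
            (MvPolynomial.map (algebraMap R R') c) = (minpoly K' α').coeff j)
    ∧ ∀ c : MvPolynomial (Fin n) R,
        algebraMap (MvPolynomial (Fin n) R) K c = (-1) ^ d * (minpoly K α).coeff 0 →
        algebraMap (MvPolynomial (Fin n) R') K' (MvPolynomial.map (algebraMap R R') c)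
          = (-1) ^ d * (minpoly K' α').coeff 0 :=
  det_flat_base_change_general e α hα d hd α' hα'
end

section
/- Invariance under automorphisms: let f : A → A be an R-algebra automorphism. Then the determinant is invariant under f: for every commutative R-algebra T and every x ∈ T ⊗_R A, Det((id_T ⊗ f)(x)) = Det(x). In particular det_A(f(a)) = det_A(a) for all a ∈ A, where det_A(a) denotes det_A evaluated at the coordinates of a in the basis e₁, …, eₙ. -/
/-!
The automorphism `f` acts on `S = R[t₁, …, tₙ]` by the linear substitution that expresses the
coordinates of `f x` through those of `x`, and this substitution extends to an automorphism `σ`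
of `K = Frac S`. Applying `σ` to the scalars of `K ⊗ A` moves the generic element `α` to
`(id ⊗ f) α`, which has the same minimal polynomial as `α` because `id ⊗ f` is a `K`-algebra
automorphism. Hence `σ` fixes the coefficients of `P`, so `det_A` is invariant under the
substitution, which is the claim once evaluated at coordinates.
-/

open scoped TensorProduct
open MvPolynomial Module

universe u v w x

namespace LinearMap

variable {R M₁ M₂ M₃ ι₁ ι₂ ι₃ : Type*} [CommRing R]
  [AddCommGroup M₁] [Module R M₁] [AddCommGroup M₂] [Module R M₂]
  [AddCommGroup M₃] [Module R M₃] [Fintype ι₁] [Fintype ι₂] [Fintype ι₃]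
  (b₁ : Basis ι₁ R M₁) (b₂ : Basis ι₂ R M₂) (b₃ : Basis ι₃ R M₃)

open Algebra.TensorProduct in
theorem aeval_repr_toMvPolynomial [DecidableEq ι₁] (g : M₁ →ₗ[R] M₂) {T : Type*} [CommRing T]
    [Algebra R T] (x : T ⊗[R] M₁) (i : ι₂) :
    aeval ((basis T b₁).repr x) (g.toMvPolynomial b₁ b₂ i)
      = (basis T b₂).repr (g.baseChange T x) i := by
  rw [aeval_def, ← eval_map, ← toMvPolynomial_baseChange, toMvPolynomial_eval_eq_apply,
    LinearEquiv.symm_apply_apply]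

open Algebra.TensorProduct in
theorem aeval_repr_bind₁_toMvPolynomial [DecidableEq ι₁] (g : M₁ →ₗ[R] M₂) {T : Type*}
    [CommRing T] [Algebra R T] (x : T ⊗[R] M₁) (p : MvPolynomial ι₂ R) :
    aeval ((basis T b₁).repr x) (bind₁ (g.toMvPolynomial b₁ b₂) p)
      = aeval ((basis T b₂).repr (g.baseChange T x)) p := by
  simp only [aeval_bind₁, aeval_repr_toMvPolynomial]

theorem eval_repr_bind₁_toMvPolynomial [DecidableEq ι₁] (g : M₁ →ₗ[R] M₂) (a : M₁)
    (p : MvPolynomial ι₂ R) :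
    eval (b₁.repr a) (bind₁ (g.toMvPolynomial b₁ b₂) p) = eval (b₂.repr (g a)) p := by
  simp only [eval, eval₂Hom_bind₁]
  simp only [← eval.eq_1, toMvPolynomial_eval_eq_apply, LinearEquiv.symm_apply_apply]

theorem bind₁_toMvPolynomial_comp [DecidableEq ι₁] [DecidableEq ι₂] (g : M₂ →ₗ[R] M₃)
    (h : M₁ →ₗ[R] M₂) :
    (bind₁ (h.toMvPolynomial b₁ b₂)).comp (bind₁ (g.toMvPolynomial b₂ b₃))
      = bind₁ ((g ∘ₗ h).toMvPolynomial b₁ b₃) := by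
  change _ = bind₁ (toMatrix b₁ b₃ (g ∘ₗ h)).toMvPolynomial
  rw [bind₁_comp_bind₁, toMatrix_comp b₁ b₂ b₃]
  exact congrArg bind₁ (funext fun i => (Matrix.toMvPolynomial_mul _ _ i).symm)

theorem bind₁_toMvPolynomial_id [DecidableEq ι₁] :
    bind₁ ((id : M₁ →ₗ[R] M₁).toMvPolynomial b₁ b₁) = AlgHom.id R _ := by
  change bind₁ (toMatrix b₁ b₁ id).toMvPolynomial = _
  rw [toMatrix_id, Matrix.toMvPolynomial_one, bind₁_X_left]

end LinearMap

namespace LinearEquiv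

variable {R M₁ M₂ ι₁ ι₂ : Type*} [CommRing R]
  [AddCommGroup M₁] [Module R M₁] [AddCommGroup M₂] [Module R M₂]
  [Fintype ι₁] [DecidableEq ι₁] [Fintype ι₂] [DecidableEq ι₂]
  (b₁ : Basis ι₁ R M₁) (b₂ : Basis ι₂ R M₂)

/-- `p ↦ p ∘ f`, for polynomials read as functions of the coordinates in `b₂` and `b₁`. -/
noncomputable def mvPolynomialPullback (f : M₁ ≃ₗ[R] M₂) :
    MvPolynomial ι₂ R ≃ₐ[R] MvPolynomial ι₁ R :=
  AlgEquiv.ofAlgHom (bind₁ (f.toLinearMap.toMvPolynomial b₁ b₂))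
    (bind₁ (f.symm.toLinearMap.toMvPolynomial b₂ b₁))
    (by rw [LinearMap.bind₁_toMvPolynomial_comp, f.symm_comp, LinearMap.bind₁_toMvPolynomial_id])
    (by rw [LinearMap.bind₁_toMvPolynomial_comp, f.comp_symm, LinearMap.bind₁_toMvPolynomial_id])

theorem mvPolynomialPullback_apply (f : M₁ ≃ₗ[R] M₂) (p : MvPolynomial ι₂ R) :
    f.mvPolynomialPullback b₁ b₂ p = bind₁ (f.toLinearMap.toMvPolynomial b₁ b₂) p :=
  rfl

end LinearEquiv

theorem Algebra.TensorProduct.basis_repr_sum_tmul {R M ι L : Type*} [CommRing R]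
    [AddCommGroup M] [Module R M] [Fintype ι] [CommRing L] [Algebra R L] (b : Basis ι R M)
    (c : ι → L) (j : ι) :
    (basis L b).repr (∑ i, c i ⊗ₜ[R] b i) j = c j := by
  classical
  simp [basis_repr_tmul, Finsupp.single_apply]

section GenericElement

variable {R M₁ M₂ ι₁ ι₂ : Type*} [CommRing R]
  [AddCommGroup M₁] [Module R M₁] [AddCommGroup M₂] [Module R M₂]
  [Fintype ι₁] [DecidableEq ι₁] [Fintype ι₂]
  (L : Type*) [CommRing L] [Algebra R L] [Algebra (MvPolynomial ι₁ R) L]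
  [IsScalarTower R (MvPolynomial ι₁ R) L]

noncomputable def Module.Basis.genericElement (b : Basis ι₁ R M₁) : L ⊗[R] M₁ :=
  ∑ i, algebraMap (MvPolynomial ι₁ R) L (X i) ⊗ₜ[R] b i

open Algebra.TensorProduct in
theorem LinearMap.baseChange_genericElement (b₁ : Basis ι₁ R M₁) (b₂ : Basis ι₂ R M₂)
    (g : M₁ →ₗ[R] M₂) :
    g.baseChange L (b₁.genericElement L)
      = ∑ j, algebraMap (MvPolynomial ι₁ R) L (g.toMvPolynomial b₁ b₂ j) ⊗ₜ[R] b₂ j := by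
  refine (basis L b₂).repr.injective (Finsupp.ext fun j => ?_)
  have hcoord : ⇑((basis L b₁).repr (b₁.genericElement L))
      = fun i => IsScalarTower.toAlgHom R (MvPolynomial ι₁ R) L (X i) :=
    funext (basis_repr_sum_tmul b₁ _)
  rw [basis_repr_sum_tmul, ← aeval_repr_toMvPolynomial b₁, hcoord, ← comp_aeval_apply,
    aeval_X_left_apply, IsScalarTower.coe_toAlgHom']

end GenericElement

theorem minpoly.map_eq_self_of_semilinear {K B : Type*} [Field K] [Ring B] [Algebra K B]
    (σ : K →+* K) (G : B →+* B) (hG : G.comp (algebraMap K B) = (algebraMap K B).comp σ)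
    {x : B} (hx : IsIntegral K x) (hGx : minpoly K (G x) = minpoly K x) :
    (minpoly K x).map σ = minpoly K x := by
  have hann : Polynomial.aeval (G x) ((minpoly K x).map σ) = 0 := by
    rw [Polynomial.aeval_def, Polynomial.eval₂_map, ← hG, ← Polynomial.hom_eval₂,
      ← Polynomial.aeval_def, minpoly.aeval, map_zero]
  have hdvd := minpoly.dvd K (G x) hann
  rw [hGx] at hdvd
  exact Polynomial.eq_of_monic_of_dvd_of_natDegree_le (minpoly.monic hx)
    ((minpoly.monic hx).map σ) hdvd ((minpoly.monic hx).natDegree_map σ).le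

theorem Module.Basis.map_minpoly_genericElement {R A ι : Type*} [CommRing R] [Ring A]
    [Algebra R A] [Fintype ι] [DecidableEq ι] (e : Basis ι R A) (K : Type*) [Field K]
    [Algebra (MvPolynomial ι R) K] [IsFractionRing (MvPolynomial ι R) K] [Algebra R K]
    [IsScalarTower R (MvPolynomial ι R) K] (f : A ≃ₐ[R] A) :
    (minpoly K (e.genericElement K)).map
        (IsFractionRing.algEquivOfAlgEquiv (K := K) (L := K)
          (f.toLinearEquiv.mvPolynomialPullback e e) : K →+* K)
      = minpoly K (e.genericElement K) := by
  set σ : K ≃ₐ[R] K :=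
    IsFractionRing.algEquivOfAlgEquiv (f.toLinearEquiv.mvPolynomialPullback e e)
  let G : K ⊗[R] A →ₐ[R] K ⊗[R] A := Algebra.TensorProduct.map σ.toAlgHom (AlgHom.id R A)
  have hGα : G (e.genericElement K) = f.toLinearMap.baseChange K (e.genericElement K) := by
    rw [LinearMap.baseChange_genericElement K e e]
    simp [G, σ, genericElement, LinearEquiv.mvPolynomialPullback_apply]
  have : Module.Finite K (K ⊗[R] A) := Module.Finite.of_basis (Algebra.TensorProduct.basis K e)
  refine minpoly.map_eq_self_of_semilinear _ (G : K ⊗[R] A →+* K ⊗[R] A) (by ext; rfl)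
    (.of_finite K _) ?_
  rw [AlgHom.coe_toRingHom, hGα]
  exact minpoly.algEquiv_eq (Algebra.TensorProduct.congr AlgEquiv.refl f :
    K ⊗[R] A ≃ₐ[K] K ⊗[R] A) _

theorem det_invariant_under_automorphism_general
    {R : Type u} [CommRing R]
    {n : ℕ}
    {A : Type v} [Ring A] [Algebra R A] (e : Module.Basis (Fin n) R A)
    {K : Type w} [Field K] [Algebra (MvPolynomial (Fin n) R) K]
    [IsFractionRing (MvPolynomial (Fin n) R) K]
    [Algebra R K] [IsScalarTower R (MvPolynomial (Fin n) R) K]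
    (α : K ⊗[R] A)
    (hα : α = ∑ i, algebraMap (MvPolynomial (Fin n) R) K (MvPolynomial.X i) ⊗ₜ[R] e i)
    (d : ℕ)
    (detA : MvPolynomial (Fin n) R)
    (hdetA : algebraMap (MvPolynomial (Fin n) R) K detA
      = (-1) ^ d * (minpoly K α).coeff 0)
    (f : A ≃ₐ[R] A) :
    (∀ (T : Type x) [CommRing T] [Algebra R T], ∀ x : T ⊗[R] A,
      MvPolynomial.aeval
          (fun i => ((Algebra.TensorProduct.basis T e).repr
            (LinearMap.baseChange T f.toLinearMap x)) i) detA
        = MvPolynomial.aeval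
            (fun i => ((Algebra.TensorProduct.basis T e).repr x) i) detA)
    ∧ ∀ a : A,
        MvPolynomial.eval (fun i => e.repr (f a) i) detA
          = MvPolynomial.eval (fun i => e.repr a i) detA := by
  obtain rfl : α = e.genericElement K := hα
  have hfix : bind₁ (f.toLinearMap.toMvPolynomial e e) detA = detA := by
    refine IsFractionRing.injective (MvPolynomial (Fin n) R) K ?_
    rw [← LinearEquiv.mvPolynomialPullback_apply,
      ← IsFractionRing.algEquivOfAlgEquiv_algebraMap (K := K) (L := K), hdetA, map_mul, map_pow,
      map_neg, map_one]
    have hcoeff := Polynomial.ext_iff.mp (e.map_minpoly_genericElement K f) 0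
    rw [Polynomial.coeff_map] at hcoeff
    exact congrArg _ hcoeff
  refine ⟨fun T _ _ x => ?_, fun a => ?_⟩
  · rw [← LinearMap.aeval_repr_bind₁_toMvPolynomial e e, hfix]
  · have h := LinearMap.eval_repr_bind₁_toMvPolynomial e e f.toLinearMap a detA
    rw [hfix] at h
    exact h.symm

/-- Invariance of the determinant under algebra automorphisms: if `f : A ≃ₐ[R] A`, then
for every commutative `R`-algebra `T` and every `x ∈ T ⊗[R] A`,
`Det((id_T ⊗ f)(x)) = Det(x)`; in particular `det_A(f(a)) = det_A(a)` for all `a ∈ A`. -/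
theorem det_invariant_under_automorphism
    {R : Type u} [CommRing R] [IsDomain R] [IsIntegrallyClosed R]
    {n : ℕ} (hn : 2 ≤ n)
    {A : Type v} [Ring A] [Algebra R A] (e : Module.Basis (Fin n) R A)
    {K : Type w} [Field K] [Algebra (MvPolynomial (Fin n) R) K]
    [IsFractionRing (MvPolynomial (Fin n) R) K]
    [Algebra R K] [IsScalarTower R (MvPolynomial (Fin n) R) K]
    (α : K ⊗[R] A)
    (hα : α = ∑ i, algebraMap (MvPolynomial (Fin n) R) K (MvPolynomial.X i) ⊗ₜ[R] e i)
    (d : ℕ) (hd : d = (minpoly K α).natDegree)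
    (detA : MvPolynomial (Fin n) R)
    (hdetA : algebraMap (MvPolynomial (Fin n) R) K detA
      = (-1) ^ d * (minpoly K α).coeff 0)
    (f : A ≃ₐ[R] A) :
    (∀ (T : Type x) [CommRing T] [Algebra R T], ∀ x : T ⊗[R] A,
      MvPolynomial.aeval
          (fun i => ((Algebra.TensorProduct.basis T e).repr
            (LinearMap.baseChange T f.toLinearMap x)) i) detA
        = MvPolynomial.aeval
            (fun i => ((Algebra.TensorProduct.basis T e).repr x) i) detA)
    ∧ ∀ a : A,
        MvPolynomial.eval (fun i => e.repr (f a) i) detA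
          = MvPolynomial.eval (fun i => e.repr a i) detA :=
  det_invariant_under_automorphism_general e α hα d detA hdetA f
end

section
/- Invariance under antiautomorphisms: let f : A → A be an R-linear bijection with f(1) = 1 and f(a·b) = f(b)·f(a) for all a, b ∈ A (an R-algebra antiautomorphism). Then the determinant is invariant under f: for every commutative R-algebra T and every x ∈ T ⊗_R A, Det((id_T ⊗ f)(x)) = Det(x). -/
/-!
Let `σ` be the automorphism `p ↦ p ∘ f` of `S = R[t₁, …, tₙ]`, viewed as the ring of polynomial
functions on `A` in the coordinates of `e`, and let `ρ` be the automorphism of `K = Frac S`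
induced by `σ⁻¹`. The map `G = ρ ⊗ f` of `K ⊗ A` is `ρ`-semilinear, reverses products and fixes
the generic element `α`, so `G (P α) = (ρ P) α` gives `P ∣ ρ P`; both are monic of the same
degree, hence `ρ` fixes `P`. Therefore `σ⁻¹` fixes `det_A = (-1)^d P(0)`, i.e. `det_A ∘ f = det_A`,
and specialising the coordinates to any `T` gives the claim.
-/

open scoped TensorProduct
open MvPolynomial

universe u v w x

namespace LinearMap

section MapMulRev

variable {K B : Type*}

theorem map_pow_of_map_mul_rev [CommSemiring K] [Semiring B] [Module K B] {ρ : K →+* K}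
    (G : B →ₛₗ[ρ] B) (hG_one : G 1 = 1) (hG_mul : ∀ x y, G (x * y) = G y * G x)
    (a : B) (k : ℕ) : G (a ^ k) = G a ^ k := by
  induction k with
  | zero => simpa using hG_one
  | succ k ih => rw [pow_succ, hG_mul, ih, pow_succ']

open Polynomial in
theorem map_aeval_of_map_mul_rev [CommSemiring K] [Semiring B] [Algebra K B] {ρ : K →+* K}
    (G : B →ₛₗ[ρ] B) (hG_one : G 1 = 1) (hG_mul : ∀ x y, G (x * y) = G y * G x)
    (a : B) (p : K[X]) : G (aeval a p) = aeval (G a) (p.map ρ) := by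
  rw [aeval_eq_sum_range, aeval_eq_sum_range' (Nat.lt_succ_of_le natDegree_map_le), map_sum]
  refine Finset.sum_congr rfl fun i _ => ?_
  rw [G.map_smulₛₗ, G.map_pow_of_map_mul_rev hG_one hG_mul, Polynomial.coeff_map]

open Polynomial in
theorem minpoly_map_eq_self_of_map_mul_rev [Field K] [Ring B] [Algebra K B] {ρ : K →+* K}
    (G : B →ₛₗ[ρ] B) (hG_one : G 1 = 1) (hG_mul : ∀ x y, G (x * y) = G y * G x)
    {α : B} (hα : G α = α) : (minpoly K α).map ρ = minpoly K α := by
  by_cases hint : IsIntegral K α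
  · have hmonic := minpoly.monic hint
    have hdvd : minpoly K α ∣ (minpoly K α).map ρ := by
      refine minpoly.dvd K α ?_
      rw [← hα, ← G.map_aeval_of_map_mul_rev hG_one hG_mul, hα, minpoly.aeval, map_zero]
    exact eq_of_monic_of_dvd_of_natDegree_le hmonic (hmonic.map ρ) hdvd
      (hmonic.natDegree_map ρ).le
  · rw [minpoly.eq_zero hint, Polynomial.map_zero]

end MapMulRev

theorem baseChange_mul_of_map_mul_rev {R A T : Type*} [CommRing R] [Ring A] [Algebra R A]
    [CommRing T] [Algebra R T] (f : A →ₗ[R] A) (hf : ∀ a b, f (a * b) = f b * f a)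
    (y z : T ⊗[R] A) : f.baseChange T (y * z) = f.baseChange T z * f.baseChange T y := by
  induction y using TensorProduct.induction_on with
  | zero => simp
  | add y₁ y₂ h₁ h₂ => rw [add_mul, map_add, h₁, h₂, map_add, mul_add]
  | tmul s a =>
    induction z using TensorProduct.induction_on with
    | zero => simp
    | add z₁ z₂ h₁ h₂ => rw [mul_add, map_add, h₁, h₂, map_add, add_mul]
    | tmul t b => simp only [Algebra.TensorProduct.tmul_mul_tmul, baseChange_tmul, hf, mul_comm s]

section Coordinates

variable {R M ι : Type*} [CommRing R] [AddCommGroup M] [Module R M] [Fintype ι] [DecidableEq ι]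
  (b : Module.Basis ι R M)

theorem bind₁_toMvPolynomial_comp_s8 (f g : M →ₗ[R] M) :
    (bind₁ (g.toMvPolynomial b b)).comp (bind₁ (f.toMvPolynomial b b))
      = bind₁ ((f ∘ₗ g).toMvPolynomial b b) := by
  rw [bind₁_comp_bind₁]
  congr 1
  funext i
  rw [toMvPolynomial, toMvPolynomial, toMatrix_comp b b b, Matrix.toMvPolynomial_mul]
  rfl

theorem aeval_repr_toMvPolynomial_s8 (f : M →ₗ[R] M) (T : Type*) [CommRing T] [Algebra R T]
    (x : T ⊗[R] M) (i : ι) :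
    aeval ((Algebra.TensorProduct.basis T b).repr x) (f.toMvPolynomial b b i)
      = (Algebra.TensorProduct.basis T b).repr (f.baseChange T x) i := by
  rw [aeval_def, ← eval_map, ← toMvPolynomial_baseChange, toMvPolynomial_eval_eq_apply,
    LinearEquiv.symm_apply_apply]

theorem aeval_repr_baseChange (f : M →ₗ[R] M) (T : Type*) [CommRing T] [Algebra R T]
    (x : T ⊗[R] M) (p : MvPolynomial ι R) :
    aeval ((Algebra.TensorProduct.basis T b).repr (f.baseChange T x)) p
      = aeval ((Algebra.TensorProduct.basis T b).repr x) (bind₁ (f.toMvPolynomial b b) p) := by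
  rw [aeval_bind₁]
  congr 2
  funext i
  exact (aeval_repr_toMvPolynomial_s8 b f T x i).symm

end Coordinates

end LinearMap

namespace Algebra.TensorProduct

variable {R A T T' ι : Type*} [CommRing R] [Ring A] [Algebra R A] [CommRing T] [Algebra R T]
  [CommRing T'] [Algebra R T']

theorem map_id_smul (φ : T →ₐ[R] T') (c : T) (y : T ⊗[R] A) :
    map φ (AlgHom.id R A) (c • y) = φ c • map φ (AlgHom.id R A) y := by
  simp only [Algebra.smul_def, map_mul, algebraMap_apply, map_tmul, Algebra.algebraMap_self,
    RingHom.id_apply, map_one]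

theorem basis_repr_map_id (e : Module.Basis ι R A) (φ : T →ₐ[R] T') (y : T ⊗[R] A) (i : ι) :
    (basis T' e).repr (map φ (AlgHom.id R A) y) i = φ ((basis T e).repr y i) := by
  induction y using TensorProduct.induction_on with
  | zero => simp
  | add y₁ y₂ h₁ h₂ => simp only [map_add, Finsupp.add_apply, h₁, h₂]
  | tmul s a => simp [Finsupp.mapRange_apply]

end Algebra.TensorProduct

namespace LinearEquiv

variable {R M ι : Type*} [CommRing R] [AddCommGroup M] [Module R M] [Fintype ι] [DecidableEq ι]

/-- Precomposition `p ↦ p ∘ g` on polynomial functions on `M` written in the coordinates of `b`. -/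
noncomputable def pullbackMvPolynomial (b : Module.Basis ι R M) (g : M ≃ₗ[R] M) :
    MvPolynomial ι R ≃ₐ[R] MvPolynomial ι R :=
  AlgEquiv.ofAlgHom (bind₁ ((g : M →ₗ[R] M).toMvPolynomial b b))
    (bind₁ ((g.symm : M →ₗ[R] M).toMvPolynomial b b))
    (by rw [LinearMap.bind₁_toMvPolynomial_comp_s8, ← coe_trans, self_trans_symm,
      refl_toLinearMap, LinearMap.toMvPolynomial_id, bind₁_X_left])
    (by rw [LinearMap.bind₁_toMvPolynomial_comp_s8, ← coe_trans, symm_trans_self,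
      refl_toLinearMap, LinearMap.toMvPolynomial_id, bind₁_X_left])

theorem minpoly_generic_map_pullback_symm {A : Type*} [Ring A] [Algebra R A]
    (e : Module.Basis ι R A) {K : Type*} [Field K] [Algebra (MvPolynomial ι R) K]
    [IsFractionRing (MvPolynomial ι R) K] [Algebra R K] [IsScalarTower R (MvPolynomial ι R) K]
    (α : K ⊗[R] A) (hα : α = ∑ i, algebraMap (MvPolynomial ι R) K (X i) ⊗ₜ[R] e i)
    (g : A ≃ₗ[R] A) (hg_one : g 1 = 1) (hg_mul : ∀ a b, g (a * b) = g b * g a) :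
    (minpoly K α).map
        ((IsFractionRing.algEquivOfAlgEquiv (g.pullbackMvPolynomial e).symm : K ≃ₐ[R] K) : K →+* K)
      = minpoly K α := by
  set ρ : K ≃ₐ[R] K := IsFractionRing.algEquivOfAlgEquiv (g.pullbackMvPolynomial e).symm
  let F := (g : A →ₗ[R] A).baseChange K
  let G : K ⊗[R] A →ₛₗ[(ρ : K →+* K)] K ⊗[R] A :=
    { toFun y := Algebra.TensorProduct.map (ρ : K →ₐ[R] K) (AlgHom.id R A) (F y)
      map_add' y z := by rw [map_add, map_add]
      map_smul' c y := by
        rw [F.map_smul, Algebra.TensorProduct.map_id_smul]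
        rfl }
  refine G.minpoly_map_eq_self_of_map_mul_rev ?one ?mul ?fixed
  case one => simp [G, F, Algebra.TensorProduct.one_def, hg_one]
  case mul =>
    intro y z
    simp only [G, LinearMap.coe_mk, AddHom.coe_mk, F,
      (g : A →ₗ[R] A).baseChange_mul_of_map_mul_rev hg_mul, map_mul]
  case fixed =>
    have hα_repr : ⇑((Algebra.TensorProduct.basis K e).repr α)
        = fun i => algebraMap (MvPolynomial ι R) K (X i) := by
      ext i
      simp [hα, Finsupp.single_apply, Algebra.smul_def]
    have haeval : ∀ p, aeval (fun i => algebraMap (MvPolynomial ι R) K (X i)) p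
        = algebraMap (MvPolynomial ι R) K p := fun p => by
      simpa using (comp_aeval_apply X (IsScalarTower.toAlgHom R (MvPolynomial ι R) K) p).symm
    apply (Algebra.TensorProduct.basis K e).ext_elem
    intro i
    simp only [G, LinearMap.coe_mk, AddHom.coe_mk, Algebra.TensorProduct.basis_repr_map_id, F]
    rw [← LinearMap.aeval_repr_toMvPolynomial_s8, hα_repr, haeval,
      ← bind₁_X_right (g.toLinearMap.toMvPolynomial e e) i]
    exact (IsFractionRing.algEquivOfAlgEquiv_algebraMap _ _).trans
      (congrArg _ ((g.pullbackMvPolynomial e).symm_apply_apply (X i)))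

end LinearEquiv

theorem det_invariant_under_antiautomorphism_general
    {R : Type u} [CommRing R]
    {n : ℕ}
    {A : Type v} [Ring A] [Algebra R A] (e : Module.Basis (Fin n) R A)
    {K : Type w} [Field K] [Algebra (MvPolynomial (Fin n) R) K]
    [IsFractionRing (MvPolynomial (Fin n) R) K]
    [Algebra R K] [IsScalarTower R (MvPolynomial (Fin n) R) K]
    (α : K ⊗[R] A)
    (hα : α = ∑ i, algebraMap (MvPolynomial (Fin n) R) K (MvPolynomial.X i) ⊗ₜ[R] e i)
    (d : ℕ)
    (detA : MvPolynomial (Fin n) R)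
    (hdetA : algebraMap (MvPolynomial (Fin n) R) K detA
      = (-1) ^ d * (minpoly K α).coeff 0)
    (f : A →ₗ[R] A) (hbij : Function.Bijective f)
    (hone : f 1 = 1) (hanti : ∀ a b : A, f (a * b) = f b * f a) :
    ∀ (T : Type x) [CommRing T] [Algebra R T], ∀ x : T ⊗[R] A,
      MvPolynomial.aeval
          (fun i => ((Algebra.TensorProduct.basis T e).repr
            (LinearMap.baseChange T f x)) i) detA
        = MvPolynomial.aeval
            (fun i => ((Algebra.TensorProduct.basis T e).repr x) i) detA := by
  intro T _ _ x
  set σ := (LinearEquiv.ofBijective f hbij).pullbackMvPolynomial e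
  have hP := (LinearEquiv.ofBijective f hbij).minpoly_generic_map_pullback_symm e α hα hone hanti
  have hσ : σ.symm detA = detA := by
    refine IsFractionRing.injective (MvPolynomial (Fin n) R) K ?_
    rw [← IsFractionRing.algEquivOfAlgEquiv_algebraMap (K := K) (L := K) σ.symm, hdetA, map_mul,
      map_pow, map_neg, map_one]
    congr 1
    simpa using congrArg (Polynomial.coeff · 0) hP
  rw [LinearMap.aeval_repr_baseChange]
  exact congrArg _ (σ.symm_apply_eq.mp hσ).symm

/-- Invariance of the determinant under antiautomorphisms: if `f : A → A` is an
`R`-linear bijection with `f 1 = 1` and `f (a·b) = f b · f a`, then for every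
commutative `R`-algebra `T` and every `x ∈ T ⊗[R] A`, `Det((id_T ⊗ f)(x)) = Det(x)`. -/
theorem det_invariant_under_antiautomorphism
    {R : Type u} [CommRing R] [IsDomain R] [IsIntegrallyClosed R]
    {n : ℕ} (hn : 2 ≤ n)
    {A : Type v} [Ring A] [Algebra R A] (e : Module.Basis (Fin n) R A)
    {K : Type w} [Field K] [Algebra (MvPolynomial (Fin n) R) K]
    [IsFractionRing (MvPolynomial (Fin n) R) K]
    [Algebra R K] [IsScalarTower R (MvPolynomial (Fin n) R) K]
    (α : K ⊗[R] A)
    (hα : α = ∑ i, algebraMap (MvPolynomial (Fin n) R) K (MvPolynomial.X i) ⊗ₜ[R] e i)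
    (d : ℕ) (hd : d = (minpoly K α).natDegree)
    (detA : MvPolynomial (Fin n) R)
    (hdetA : algebraMap (MvPolynomial (Fin n) R) K detA
      = (-1) ^ d * (minpoly K α).coeff 0)
    (f : A →ₗ[R] A) (hbij : Function.Bijective f)
    (hone : f 1 = 1) (hanti : ∀ a b : A, f (a * b) = f b * f a) :
    ∀ (T : Type x) [CommRing T] [Algebra R T], ∀ x : T ⊗[R] A,
      MvPolynomial.aeval
          (fun i => ((Algebra.TensorProduct.basis T e).repr
            (LinearMap.baseChange T f x)) i) detA
        = MvPolynomial.aeval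
            (fun i => ((Algebra.TensorProduct.basis T e).repr x) i) detA :=
  det_invariant_under_antiautomorphism_general e α hα d detA hdetA f hbij hone hanti
end

section
/- Let k be any field and A a finite-dimensional associative unital k-algebra of dimension n with basis e₁, …, eₙ. If the degree of algebraicity of A equals n, i.e. the minimal polynomial of the generic element α = t₁e₁ + ⋯ + tₙeₙ ∈ A ⊗_k k(t₁, …, tₙ) over k(t₁, …, tₙ) has degree n, then A is commutative. -/
/-!
If the minimal polynomial of `α` has degree `n = dim_K (K ⊗ A)`, the powers `1, α, …, α ^ (n - 1)`
are a `K`-basis of `K ⊗ A`. So `K ⊗ A` is generated by `α` and hence commutative, and `A`, which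
embeds in it via `a ↦ 1 ⊗ a`, is commutative as well.
-/

open scoped TensorProduct

universe u v w

open Module

theorem Algebra.adjoin_singleton_eq_top_of_natDegree_minpoly_eq_finrank {K B : Type*} [Field K]
    [Ring B] [Algebra K B] [FiniteDimensional K B] {x : B}
    (h : (minpoly K x).natDegree = finrank K B) : Algebra.adjoin K {x} = ⊤ := by
  have hspan := (linearIndependent_pow (K := K) x).span_eq_top_of_card_eq_finrank'
    (by rw [Fintype.card_fin, h])
  rw [← toSubmodule_eq_top, _root_.eq_top_iff, ← hspan, Submodule.span_le]
  rintro _ ⟨i, rfl⟩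
  exact pow_mem (self_mem_adjoin_singleton K x) _

theorem commute_of_adjoin_singleton_eq_top {R B : Type*} [CommSemiring R] [Semiring B]
    [Algebra R B] {x : B} (h : Algebra.adjoin R {x} = ⊤) (y z : B) : Commute y z :=
  Algebra.commute_of_mem_adjoin_singleton_of_commute (h ▸ Algebra.mem_top)
    (Algebra.commute_of_mem_adjoin_self (h ▸ Algebra.mem_top)).symm

theorem mul_comm_of_commute_baseChange {k A K : Type*} [Field k] [Ring A] [Algebra k A]
    [CommRing K] [Nontrivial K] [Algebra k K] (h : ∀ x y : K ⊗[k] A, Commute x y) (a b : A) :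
    a * b = b * a :=
  Algebra.TensorProduct.includeRight_injective (algebraMap k K).injective <| by
    simpa only [map_mul] using
      (h (Algebra.TensorProduct.includeRight a) (Algebra.TensorProduct.includeRight b)).eq

theorem commutative_of_deg_of_algebraicity_eq_dim_general
    {k : Type u} [Field k] {n : ℕ}
    {A : Type v} [Ring A] [Algebra k A] (e : Module.Basis (Fin n) k A)
    {K : Type w} [Field K]
    [Algebra k K]
    (α : K ⊗[k] A)
    (hd : (minpoly K α).natDegree = n) :
    ∀ a b : A, a * b = b * a := by
  have : Module.Finite k A := .of_basis e
  have hdim : (minpoly K α).natDegree = finrank K (K ⊗[k] A) := by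
    rw [hd, finrank_baseChange, finrank_eq_card_basis e, Fintype.card_fin]
  exact mul_comm_of_commute_baseChange <| commute_of_adjoin_singleton_eq_top <|
    Algebra.adjoin_singleton_eq_top_of_natDegree_minpoly_eq_finrank hdim

/-- Over any field `k`, if the degree of algebraicity of an `n`-dimensional `k`-algebra
`A` equals `n` (i.e. the minimal polynomial of the generic element has degree `n`),
then `A` is commutative. -/
theorem commutative_of_deg_of_algebraicity_eq_dim
    {k : Type u} [Field k] {n : ℕ}
    {A : Type v} [Ring A] [Algebra k A] (e : Module.Basis (Fin n) k A)
    {K : Type w} [Field K] [Algebra (MvPolynomial (Fin n) k) K]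
    [IsFractionRing (MvPolynomial (Fin n) k) K]
    [Algebra k K] [IsScalarTower k (MvPolynomial (Fin n) k) K]
    (α : K ⊗[k] A)
    (hα : α = ∑ i, algebraMap (MvPolynomial (Fin n) k) K (MvPolynomial.X i) ⊗ₜ[k] e i)
    (hd : (minpoly K α).natDegree = n) :
    ∀ a b : A, a * b = b * a :=
  commutative_of_deg_of_algebraicity_eq_dim_general e α hd
end

section
/- Let R be a commutative ring, e, f, h, i ∈ R, and let B be an associative unital R-algebra containing elements x, y satisfying the multiplication table x² = −f·i·1 + (f+i)·x, x·y = −e·f·1 + e·x + f·y, y·x = −h·i·1 + h·x + i·y, y² = −e·h·1 + (e+h)·y. Then for all r, s, t ∈ R, the element a = r·1 + s·x + t·y satisfies (a − (r + i·s + e·t)·1) · (a − (r + f·s + h·t)·1) = 0. (Thus the generic element of such a 3-dimensional algebra of degree of algebraicity 2 has minimal polynomial (T − (r+is+et))(T − (r+fs+ht)) and determinant (r+is+et)(r+fs+ht).) -/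
universe u v

/-! Both factors are recentred at the two roots: with `p = x - i`, `p' = x - f`, `q = y - e`,
`q' = y - h` they become `s • p + t • q` and `s • p' + t • q'`. The table for `x²` and `y²`
says exactly `p * p' = 0` and `q * q' = 0`, and adding the tables for `x * y` and `y * x`
gives `p * q' + q * p' = 0`, so the product expands to zero. -/

section
variable {R B : Type*} [CommRing R] [Ring B] [Algebra R B]

theorem smul_add_smul_mul_smul_add_smul_eq_zero {p q p' q' : B}
    (hp : p * p' = 0) (hq : q * q' = 0) (hpq : p * q' + q * p' = 0) (s t : R) :
    (s • p + t • q) * (s • p' + t • q') = 0 := calc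
  _ = (s * s) • (p * p') + (s * t) • (p * q' + q * p') + (t * t) • (q * q') := by
    simp only [add_mul, mul_add, smul_mul_smul_comm, smul_add]; module
  _ = 0 := by simp only [hp, hq, hpq, smul_zero, add_zero]

theorem add_smul_add_smul_sub_algebraMap (r s t c d : R) (x y : B) :
    algebraMap R B r + s • x + t • y - algebraMap R B (r + c * s + d * t)
      = s • (x - algebraMap R B c) + t • (y - algebraMap R B d) := by
  simp only [Algebra.algebraMap_eq_smul_one]
  module

theorem sub_algebraMap_mul_sub_algebraMap (x y : B) (b c : R) :
    (x - algebraMap R B c) * (y - algebraMap R B b)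
      = x * y - b • x - c • y + algebraMap R B (c * b) := by
  simp only [Algebra.algebraMap_eq_smul_one, sub_mul, mul_sub, smul_mul_assoc, mul_smul_comm,
    one_mul, mul_one]
  module

end

/-- In any associative unital `R`-algebra `B` containing elements `x`, `y` satisfying
the multiplication table of the component `Alg_{3,2}` of three-dimensional algebras of
degree of algebraicity `2` (with structure constants `e`, `f`, `h`, `i`), the element
`a = r·1 + s·x + t·y` satisfies
`(a − (r + i·s + e·t)·1) · (a − (r + f·s + h·t)·1) = 0`. -/
theorem alg32_generic_element_quadratic_relation
    {R : Type u} [CommRing R] {B : Type v} [Ring B] [Algebra R B]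
    (e f h i : R) (x y : B)
    (hx2 : x * x = algebraMap R B (-(f * i)) + (f + i) • x)
    (hxy : x * y = algebraMap R B (-(e * f)) + e • x + f • y)
    (hyx : y * x = algebraMap R B (-(h * i)) + h • x + i • y)
    (hy2 : y * y = algebraMap R B (-(e * h)) + (e + h) • y) :
    ∀ r s t : R,
      ((algebraMap R B r + s • x + t • y) - algebraMap R B (r + i * s + e * t))
        * ((algebraMap R B r + s • x + t • y) - algebraMap R B (r + f * s + h * t))
      = 0 := by
  intro r s t
  rw [add_smul_add_smul_sub_algebraMap, add_smul_add_smul_sub_algebraMap]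
  apply smul_add_smul_mul_smul_add_smul_eq_zero
  · rw [sub_algebraMap_mul_sub_algebraMap, hx2, map_neg, add_smul, mul_comm f i]
    abel
  · rw [sub_algebraMap_mul_sub_algebraMap, hy2, map_neg, add_smul, mul_comm e h]
    abel
  · rw [sub_algebraMap_mul_sub_algebraMap, sub_algebraMap_mul_sub_algebraMap, hxy, hyx,
      map_neg, map_neg, mul_comm e f, mul_comm h i]
    abel
end

section
/- Let k be a field, and let a, b, c, d, e, f, g, h, i, j, l, m ∈ k (writing m for the structure constant called k in the paper). Define a bilinear multiplication on the free module k³ with basis 1, x, y by declaring 1 to be a two-sided unit and x² = a + b·x + c·y, x·y = d + e·x + f·y, y·x = g + h·x + i·y, y² = j + m·x + l·y. Then this multiplication is associative if and only if the following twelve equations hold: a = f(f−b) + c(e−l), d = c·m − e·f, g = c·m − h·i, j = m(f−b) + e(e−l), and c(e−h) = c(f−i) = m(e−h) = m(f−i) = (f+i−b)(e−h) = (f+i−b)(f−i) = (e+h−l)(e−h) = (e+h−l)(f−i) = 0. -/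
/-!
Both sides of `(pq)r = p(qr)` are trilinear, so associativity only has to be checked on basis
triples, and triples containing the unit `1` are automatic. What remains are the eight triples
of `x` and `y`, i.e. `24` polynomial identities in the structure constants; twelve of them
combine linearly into the stated equations, and conversely the stated equations generate all
`24`.
-/

open Submodule in
theorem LinearMap.assoc_of_span_eq_top {R M : Type*} [CommSemiring R] [AddCommMonoid M]
    [Module R M] (μ : M →ₗ[R] M →ₗ[R] M) {s : Set M} (hs : span R s = ⊤)
    (h : ∀ u ∈ s, ∀ v ∈ s, ∀ w ∈ s, μ (μ u v) w = μ u (μ v w)) (u v w : M) :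
    μ (μ u v) w = μ u (μ v w) := by
  -- each step extends one argument from `s` to `M`, both sides being linear in it
  have h₁ : ∀ u ∈ s, ∀ v ∈ s, μ (μ u v) = μ u ∘ₗ μ v := fun u hu v hv =>
    ext_on hs fun w hw => h u hu v hv w hw
  have h₂ : ∀ u ∈ s, μ ∘ₗ μ u = llcomp R M M M (μ u) ∘ₗ μ := fun u hu =>
    ext_on hs fun v hv => h₁ u hu v hv
  have h₃ : llcomp R M M _ μ ∘ₗ μ = (llcomp R M _ _).flip μ ∘ₗ llcomp R M M M ∘ₗ μ :=
    ext_on hs fun u hu => h₂ u hu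
  exact congr($h₃ u v w)

theorem span_unitVectors_prod_three (R : Type*) [CommSemiring R] :
    Submodule.span R ({(1, 0, 0), (0, 1, 0), (0, 0, 1)} : Set (R × R × R)) = ⊤ := by
  refine eq_top_iff.2 fun p _ => ?_
  have hp : p = p.1 • (1, 0, 0) + p.2.1 • (0, 1, 0) + p.2.2 • (0, 0, 1) := by ext <;> simp
  rw [hp]
  refine add_mem (add_mem ?_ ?_) ?_ <;>
    exact Submodule.smul_mem _ _ (Submodule.subset_span (by simp))

namespace Alg3

variable {k : Type*} [CommRing k] (a b c d e f g h i j m l : k)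

def mul (p q : k × k × k) : k × k × k :=
  (p.1 * q.1 + p.2.1 * q.2.1 * a + p.2.1 * q.2.2 * d
      + p.2.2 * q.2.1 * g + p.2.2 * q.2.2 * j,
    p.1 * q.2.1 + p.2.1 * q.1 + p.2.1 * q.2.1 * b + p.2.1 * q.2.2 * e
      + p.2.2 * q.2.1 * h + p.2.2 * q.2.2 * m,
    p.1 * q.2.2 + p.2.2 * q.1 + p.2.1 * q.2.1 * c + p.2.1 * q.2.2 * f
      + p.2.2 * q.2.1 * i + p.2.2 * q.2.2 * l)

def mulₗ : (k × k × k) →ₗ[k] (k × k × k) →ₗ[k] k × k × k :=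
  LinearMap.mk₂ k (mul a b c d e f g h i j m l)
    (fun _ _ _ => by simp only [mul, Prod.fst_add, Prod.snd_add, Prod.mk_add_mk]; ext <;> ring)
    (fun _ _ _ => by
      simp only [mul, Prod.smul_fst, Prod.smul_snd, Prod.smul_mk, smul_eq_mul]; ext <;> ring)
    (fun _ _ _ => by simp only [mul, Prod.fst_add, Prod.snd_add, Prod.mk_add_mk]; ext <;> ring)
    (fun _ _ _ => by
      simp only [mul, Prod.smul_fst, Prod.smul_snd, Prod.smul_mk, smul_eq_mul]; ext <;> ring)

theorem one_mul (p : k × k × k) : mul a b c d e f g h i j m l (1, 0, 0) p = p := by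
  simp [mul]

theorem mul_one (p : k × k × k) : mul a b c d e f g h i j m l p (1, 0, 0) = p := by
  simp [mul]

local notation "μ" => mul a b c d e f g h i j m l

theorem mul_assoc_iff_forall_mem :
    (∀ p q r : k × k × k, μ (μ p q) r = μ p (μ q r)) ↔
      ∀ u ∈ ({(0, 1, 0), (0, 0, 1)} : Set (k × k × k)),
        ∀ v ∈ ({(0, 1, 0), (0, 0, 1)} : Set _),
          ∀ w ∈ ({(0, 1, 0), (0, 0, 1)} : Set _), μ (μ u v) w = μ u (μ v w) := by
  refine ⟨fun H u _ v _ w _ => H u v w, fun H => ?_⟩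
  refine (mulₗ a b c d e f g h i j m l).assoc_of_span_eq_top (span_unitVectors_prod_three k) ?_
  rintro u hu v hv w hw
  simp only [mulₗ, LinearMap.mk₂_apply]
  rcases hu with rfl | hu
  · simp only [one_mul]
  rcases hv with rfl | hv
  · simp only [one_mul, mul_one]
  rcases hw with rfl | hw
  · simp only [mul_one]
  exact H u hu v hv w hw

theorem forall_mem_mul_assoc_iff :
    (∀ u ∈ ({(0, 1, 0), (0, 0, 1)} : Set (k × k × k)),
        ∀ v ∈ ({(0, 1, 0), (0, 0, 1)} : Set _),
          ∀ w ∈ ({(0, 1, 0), (0, 0, 1)} : Set _), μ (μ u v) w = μ u (μ v w)) ↔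
      (a = f * (f - b) + c * (e - l)
        ∧ d = c * m - e * f
        ∧ g = c * m - h * i
        ∧ j = m * (f - b) + e * (e - l)
        ∧ c * (e - h) = 0 ∧ c * (f - i) = 0
        ∧ m * (e - h) = 0 ∧ m * (f - i) = 0
        ∧ (f + i - b) * (e - h) = 0 ∧ (f + i - b) * (f - i) = 0
        ∧ (e + h - l) * (e - h) = 0 ∧ (e + h - l) * (f - i) = 0) := by
  simp only [Set.mem_insert_iff, Set.mem_singleton_iff]
  constructor
  · intro H
    have Exxx := H _ (.inl rfl) _ (.inl rfl) _ (.inl rfl)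
    have Exxy := H _ (.inl rfl) _ (.inl rfl) _ (.inr rfl)
    have Exyx := H _ (.inl rfl) _ (.inr rfl) _ (.inl rfl)
    have Exyy := H _ (.inl rfl) _ (.inr rfl) _ (.inr rfl)
    have Eyxx := H _ (.inr rfl) _ (.inl rfl) _ (.inl rfl)
    have Eyxy := H _ (.inr rfl) _ (.inl rfl) _ (.inr rfl)
    have Eyyx := H _ (.inr rfl) _ (.inr rfl) _ (.inl rfl)
    have Eyyy := H _ (.inr rfl) _ (.inr rfl) _ (.inr rfl)
    simp only [mul, Prod.mk.injEq] at Exxx Exxy Exyx Exyy Eyxx Eyxy Eyyx Eyyy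
    obtain ⟨-, Exxx₁, Exxx₂⟩ := Exxx
    obtain ⟨-, Exxy₁, Exxy₂⟩ := Exxy
    obtain ⟨-, Exyx₁, -⟩ := Exyx
    obtain ⟨-, Exyy₁, -⟩ := Exyy
    obtain ⟨-, Eyxx₁, Eyxx₂⟩ := Eyxx
    obtain ⟨-, -, Eyxy₂⟩ := Eyxy
    obtain ⟨-, Eyyx₁, -⟩ := Eyyx
    obtain ⟨-, Eyyy₁, Eyyy₂⟩ := Eyyy
    refine ⟨?_, ?_, ?_, ?_, ?_, ?_, ?_, ?_, ?_, ?_, ?_, ?_⟩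
    · linear_combination Exxy₂
    · linear_combination -Exxy₁
    · linear_combination Eyxx₁
    · linear_combination -Exyy₁
    · linear_combination -Exxx₁
    · linear_combination -Exxx₂
    · linear_combination Eyyy₁
    · linear_combination Eyyy₂
    · linear_combination -Exxy₁ - Eyxx₁ - Exyx₁
    · linear_combination -Eyxx₂ - Exxy₂ + Exxx₁
    · linear_combination Eyyx₁ + Exyy₁ - Eyyy₂
    · linear_combination Eyxy₂ - Eyxx₁ - Exxy₁
  · rintro ⟨h₁, h₂, h₃, h₄, h₅, h₆, h₇, h₈, h₉, h₁₀, h₁₁, h₁₂⟩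
    rintro u (rfl | rfl) v (rfl | rfl) w (rfl | rfl) <;> simp only [mul, Prod.mk.injEq] <;>
      refine ⟨?_, ?_, ?_⟩ <;> grind

end Alg3

/-- Equations for `Alg₃`: the bilinear multiplication on `k³` with basis `1, x, y`
(elements written as triples `(u, v, w) = u·1 + v·x + w·y`, `1` a two-sided unit)
determined by the structure constants
`x² = a + b·x + c·y`, `x·y = d + e·x + f·y`, `y·x = g + h·x + i·y`, `y² = j + m·x + l·y`
is associative if and only if the twelve equations hold:
`a = f(f−b) + c(e−l)`, `d = cm − ef`, `g = cm − hi`, `j = m(f−b) + e(e−l)`, and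
`c(e−h) = c(f−i) = m(e−h) = m(f−i) = (f+i−b)(e−h) = (f+i−b)(f−i) = (e+h−l)(e−h)
= (e+h−l)(f−i) = 0`. -/
theorem alg3_associative_iff
    {k : Type u} [Field k] (a b c d e f g h i j m l : k)
    (mul : (k × k × k) → (k × k × k) → (k × k × k))
    (hmul : ∀ p q : k × k × k, mul p q =
      (p.1 * q.1 + p.2.1 * q.2.1 * a + p.2.1 * q.2.2 * d
          + p.2.2 * q.2.1 * g + p.2.2 * q.2.2 * j,
        p.1 * q.2.1 + p.2.1 * q.1 + p.2.1 * q.2.1 * b + p.2.1 * q.2.2 * e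
          + p.2.2 * q.2.1 * h + p.2.2 * q.2.2 * m,
        p.1 * q.2.2 + p.2.2 * q.1 + p.2.1 * q.2.1 * c + p.2.1 * q.2.2 * f
          + p.2.2 * q.2.1 * i + p.2.2 * q.2.2 * l)) :
    (∀ p q r : k × k × k, mul (mul p q) r = mul p (mul q r)) ↔
      (a = f * (f - b) + c * (e - l)
        ∧ d = c * m - e * f
        ∧ g = c * m - h * i
        ∧ j = m * (f - b) + e * (e - l)
        ∧ c * (e - h) = 0 ∧ c * (f - i) = 0
        ∧ m * (e - h) = 0 ∧ m * (f - i) = 0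
        ∧ (f + i - b) * (e - h) = 0 ∧ (f + i - b) * (f - i) = 0
        ∧ (e + h - l) * (e - h) = 0 ∧ (e + h - l) * (f - i) = 0) := by
  obtain rfl : mul = Alg3.mul a b c d e f g h i j m l := funext₂ hmul
  rw [Alg3.mul_assoc_iff_forall_mem, Alg3.forall_mem_mul_assoc_iff]
end
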